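/- arXiv:2204.05853 — 4 statements merged into one kernel-verified Lean document; each statement's English description precedes it below -/
import Mathlib

section
/- Let $G = (V, E)$ be an $(h,l)$-dense digraph in a convex set $\Omega \subset \mathbb{R}^2$ with $l > 0$. Then $G$ is connected: for any $u, v \in V$ there is a finite directed path in $G$ from $u$ to $v$. -/
/-- An `(h,l)`-dense digraph in a convex set `Ω ⊆ ℝ²` is connected. -/
theorem hl_dense_digraph_connected
    (Ω : Set (EuclideanSpace ℝ (Fin 2))) (hΩ : Convex ℝ Ω)
    (V : Set (EuclideanSpace ℝ (Fin 2)))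
    (E : EuclideanSpace ℝ (Fin 2) → EuclideanSpace ℝ (Fin 2) → Prop)
    (h l : ℝ) (hh : 0 ≤ h) (hl : 0 < l)
    (containment : V ⊆ Ω)
    (density : ∀ p ∈ Ω, ∃ v ∈ V, ‖p - v‖ ≤ h)
    (connectivity : ∀ v ∈ V, ∀ w ∈ V, ‖v - w‖ ≤ l + 2 * h → E v w) :
    ∀ u ∈ V, ∀ v ∈ V,
      Relation.ReflTransGen (fun a b => a ∈ V ∧ b ∈ V ∧ E a b) u v := by
  have key : ∀ n : ℕ, ∀ u ∈ V, ∀ v ∈ V, ‖u - v‖ ≤ n * l →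
      Relation.ReflTransGen (fun a b => a ∈ V ∧ b ∈ V ∧ E a b) u v := by
    intro n
    induction n with
    | zero =>
      intro u hu v hv hle
      have huv : u = v := by
        have h0 : ‖u - v‖ = 0 := le_antisymm (by simpa using hle) (norm_nonneg _)
        exact sub_eq_zero.mp (norm_eq_zero.mp h0)
      exact huv ▸ Relation.ReflTransGen.refl
    | succ n ih =>
      intro u hu v hv hle
      by_cases hcase : ‖u - v‖ ≤ l + 2 * h
      · exact Relation.ReflTransGen.single ⟨hu, hv, connectivity u hu v hv hcase⟩
      · push_neg at hcase
        set d := ‖u - v‖ with hd_def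
        have hd : 0 < d := lt_trans (by positivity) hcase
        set t := (l + h) / d with ht_def
        have ht0 : 0 ≤ t := by positivity
        have ht1 : t ≤ 1 := by rw [div_le_one hd]; linarith
        set p := u + t • (v - u) with hp_def
        have hpΩ : p ∈ Ω :=
          hΩ.add_smul_sub_mem (containment hu) (containment hv) ⟨ht0, ht1⟩
        obtain ⟨w, hwV, hpw⟩ := density p hpΩ
        have hvu : ‖v - u‖ = d := norm_sub_rev v u
        have hup : ‖u - p‖ = l + h := by
          have : u - p = -(t • (v - u)) := by rw [hp_def]; module
          rw [this, norm_neg, norm_smul, Real.norm_eq_abs, abs_of_nonneg ht0, hvu,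
            ht_def, div_mul_cancel₀ _ (ne_of_gt hd)]
        have hpv : ‖p - v‖ = d - (l + h) := by
          have : p - v = (1 - t) • (u - v) := by
            rw [hp_def]; module
          rw [this, norm_smul, Real.norm_eq_abs, abs_of_nonneg (by linarith), ← hd_def,
            ht_def, sub_mul, one_mul, div_mul_cancel₀ _ (ne_of_gt hd)]
        have huw : ‖u - w‖ ≤ l + 2 * h := by
          calc ‖u - w‖ = ‖(u - p) + (p - w)‖ := by abel_nf
            _ ≤ ‖u - p‖ + ‖p - w‖ := norm_add_le _ _
            _ ≤ (l + h) + h := by rw [hup]; linarith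
            _ = l + 2 * h := by ring
        have hwv : ‖w - v‖ ≤ n * l := by
          calc ‖w - v‖ = ‖(w - p) + (p - v)‖ := by abel_nf
            _ ≤ ‖w - p‖ + ‖p - v‖ := norm_add_le _ _
            _ ≤ h + (d - (l + h)) := by
                rw [hpv, norm_sub_rev]; linarith
            _ = d - l := by ring
            _ ≤ (n + 1) * l - l := by push_cast at hle ⊢; linarith
            _ = n * l := by ring
        exact Relation.ReflTransGen.head
          ⟨hu, hwV, connectivity u hu w hwV huw⟩ (ih w hwV v hv hwv)
  intro u hu v hv
  obtain ⟨n, hn⟩ := exists_nat_ge (‖u - v‖ / l)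
  refine key n u hu v hv ?_
  rw [div_le_iff₀ hl] at hn
  linarith
end

section
/- Let $\xi : [0,1] \to \mathbb{R}^2$ satisfy $\|\xi_\tau\| \equiv L > 0$ (constant speed) and $\|\xi_\tau(a) - \xi_\tau(b)\| \le \bar\sigma|a-b|$. Let $G$ be an $(h,l)$-dense digraph in a convex set containing the range of $\xi$, with $l > 0$, and let $\xi_R$ be the polygonal rounding of $\xi$: with $n = \lceil L/l \rceil$ and grid points $\tau_i = i/n$, choose vertices $v_i \in V$ with $\|v_i - \xi(\tau_i)\| \le h$, and let $\xi_R$ linearly interpolate the $v_i$. Then $\|\xi_R - \xi\|_{L^\infty([0,1])} \le \frac{\bar\sigma l^2}{8 L^2} + h$. -/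
/-!
On a grid cell `[a, b]` of width `1 / n ≤ l / L` the rounded path is the linear interpolation
`lineMap (v i) (v j) t` of two vertices lying within `h` of `ξ a` and `ξ b`; by convexity of the
ball it stays within `h` of `lineMap (ξ a) (ξ b) t`. That interpolation differs from
`ξ (lineMap a b t)` by at most `σ (b - a)² / 8`: expanding `ξ a` and `ξ b` to first order
around the interpolation point, the first-order terms cancel, and the Lipschitz bound on `ξ'`
leaves `σ t (1 - t) (b - a)² / 2`.
-/

open Set AffineMap

section Taylor

variable {E : Type*} [NormedAddCommGroup E] [NormedSpace ℝ E] {f f' : ℝ → E} {σ c x : ℝ}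

theorem norm_sub_sub_smul_le_of_le (hcx : c ≤ x) (hf : ∀ s ∈ Icc c x, HasDerivAt f (f' s) s)
    (hf' : ∀ s ∈ Icc c x, ‖f' s - f' c‖ ≤ σ * (s - c)) :
    ‖f x - f c - (x - c) • f' c‖ ≤ σ * (x - c) ^ 2 / 2 := by
  have hg (s) (hs : s ∈ Icc c x) :
      HasDerivAt (fun s ↦ f s - f c - (s - c) • f' c) (f' s - f' c) s :=
    (((hf s hs).sub_const (f c)).sub
      (((hasDerivAt_id s).sub_const c).smul_const (f' c))).congr_deriv (by simp)
  have hB (s : ℝ) : HasDerivAt (fun s ↦ σ * (s - c) ^ 2 / 2) (σ * (s - c)) s :=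
    ((((hasDerivAt_id s).sub_const c).pow 2).const_mul σ |>.div_const 2).congr_deriv
      (by simp; ring)
  exact image_norm_le_of_norm_deriv_right_le_deriv_boundary
    (fun s hs ↦ (hg s hs).continuousAt.continuousWithinAt)
    (fun s hs ↦ (hg s (Ico_subset_Icc_self hs)).hasDerivWithinAt) (by simp) hB
    (fun s hs ↦ hf' s (Ico_subset_Icc_self hs)) ⟨hcx, le_rfl⟩

theorem norm_sub_sub_smul_le (hf : ∀ s ∈ uIcc c x, HasDerivAt f (f' s) s)
    (hf' : ∀ s ∈ uIcc c x, ‖f' s - f' c‖ ≤ σ * |s - c|) :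
    ‖f x - f c - (x - c) • f' c‖ ≤ σ * (x - c) ^ 2 / 2 := by
  rcases le_total c x with hcx | hxc
  · rw [uIcc_of_le hcx] at hf hf'
    exact norm_sub_sub_smul_le_of_le hcx hf fun s hs ↦ by
      simpa [abs_of_nonneg (sub_nonneg.2 hs.1)] using hf' s hs
  · rw [uIcc_of_ge hxc] at hf hf'
    have hneg (s) (hs : s ∈ Icc (-c) (-x)) : -s ∈ Icc x c := ⟨le_neg.2 hs.2, neg_le.2 hs.1⟩
    have := norm_sub_sub_smul_le_of_le (f := fun s ↦ f (-s)) (f' := fun s ↦ -f' (-s))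
      (neg_le_neg hxc)
      (fun s hs ↦ ((hf (-s) (hneg s hs)).scomp s (hasDerivAt_neg s)).congr_deriv (by simp))
      (fun s hs ↦ by
        rw [neg_neg, neg_sub_neg, norm_sub_rev, sub_neg_eq_add]
        simpa [abs_of_nonpos (by linarith [hs.1] : -s - c ≤ 0), add_comm]
          using hf' (-s) (hneg s hs))
    rwa [neg_neg, neg_neg, sub_neg_eq_add, smul_neg, sub_neg_eq_add, neg_add_eq_sub,
      ← neg_sub x, neg_smul, neg_sq, ← sub_eq_add_neg] at this

theorem norm_lineMap_sub_le {a b t : ℝ} (hσ : 0 ≤ σ) (hab : a ≤ b) (ht : t ∈ Icc (0 : ℝ) 1)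
    (hf : ∀ s ∈ Icc a b, HasDerivAt f (f' s) s)
    (hf' : ∀ s ∈ Icc a b, ∀ r ∈ Icc a b, ‖f' s - f' r‖ ≤ σ * |s - r|) :
    ‖lineMap (f a) (f b) t - f (lineMap a b t)‖ ≤ σ * (b - a) ^ 2 / 8 := by
  set τ := lineMap a b t
  have hτ : τ ∈ Icc a b :=
    (convex_Icc a b).lineMap_mem (left_mem_Icc.2 hab) (right_mem_Icc.2 hab) ht
  have hsub : ∀ y ∈ Icc a b, uIcc τ y ⊆ Icc a b := fun y hy ↦ uIcc_subset_Icc hτ hy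
  have taylor (y) (hy : y ∈ Icc a b) :
      ‖f y - f τ - (y - τ) • f' τ‖ ≤ σ * (y - τ) ^ 2 / 2 :=
    norm_sub_sub_smul_le (fun s hs ↦ hf s (hsub y hy hs))
      (fun s hs ↦ hf' s (hsub y hy hs) τ hτ)
  have hτ_eq : τ = (1 - t) * a + t * b := lineMap_apply_ring a b t
  have hsplit : lineMap (f a) (f b) t - f τ =
      (1 - t) • (f a - f τ - (a - τ) • f' τ) + t • (f b - f τ - (b - τ) • f' τ) := by
    have hcancel : (1 - t) * (a - τ) + t * (b - τ) = 0 := by rw [hτ_eq]; ring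
    rw [lineMap_apply_module]
    linear_combination (norm := module) hcancel • f' τ
  obtain ⟨ht0, ht1⟩ := ht
  calc ‖lineMap (f a) (f b) t - f τ‖
      ≤ (1 - t) * (σ * (a - τ) ^ 2 / 2) + t * (σ * (b - τ) ^ 2 / 2) := by
        rw [hsplit]
        refine norm_add_le_of_le ?_ ?_ <;> rw [norm_smul_of_nonneg (by linarith)] <;> gcongr
        exacts [taylor a (left_mem_Icc.2 hab), taylor b (right_mem_Icc.2 hab)]
    _ = σ * (b - a) ^ 2 / 2 * (t * (1 - t)) := by rw [hτ_eq]; ring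
    _ ≤ σ * (b - a) ^ 2 / 2 * (1 / 4) := by gcongr; nlinarith [sq_nonneg (2 * t - 1)]
    _ = σ * (b - a) ^ 2 / 8 := by ring

end Taylor

theorem norm_lineMap_sub_lineMap_le {E : Type*} [SeminormedAddCommGroup E] [NormedSpace ℝ E]
    {p q p' q' : E} {h t : ℝ} (hp : ‖p - p'‖ ≤ h) (hq : ‖q - q'‖ ≤ h) (ht : t ∈ Icc (0 : ℝ) 1) :
    ‖lineMap p q t - lineMap p' q' t‖ ≤ h := by
  rw [← vsub_eq_sub, lineMap_vsub_lineMap]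
  simpa using (convex_closedBall (0 : E) h).lineMap_mem (by simpa using hp) (by simpa using hq) ht

section Grid

variable {k : Type*} [Field k] [LinearOrder k] [IsStrictOrderedRing k] [FloorRing k]

theorem lineMap_floor_ceil_fract (x : k) : lineMap (⌊x⌋ : k) ⌈x⌉ (Int.fract x) = x := by
  rw [lineMap_apply_ring']
  rcases Int.fract_eq_zero_or_add_one_sub_ceil x with h | h <;> rw [← Int.self_sub_floor] at h ⊢
  · linear_combination (⌈x⌉ - ⌊x⌋ - 1 : k) * h
  · linear_combination (x - ⌊x⌋) * h

theorem lineMap_natFloor_div_natCeil_div_fract {n : ℕ} (hn : n ≠ 0) {τ : k} (hτ : 0 ≤ τ) :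
    lineMap ((⌊n * τ⌋₊ : k) / n) ((⌈n * τ⌉₊ : k) / n) (Int.fract (n * τ)) = τ := by
  have hx : 0 ≤ (n : k) * τ := by positivity
  have hn' : (n : k) ≠ 0 := Nat.cast_ne_zero.2 hn
  have := lineMap_floor_ceil_fract ((n : k) * τ)
  rw [← natCast_floor_eq_intCast_floor hx, ← natCast_ceil_eq_intCast_ceil hx,
    lineMap_apply_ring'] at this
  rw [lineMap_apply_ring']
  calc Int.fract (n * τ) * ((⌈n * τ⌉₊ : k) / n - ⌊n * τ⌋₊ / n) + ⌊n * τ⌋₊ / n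
      = (Int.fract (n * τ) * (⌈n * τ⌉₊ - ⌊n * τ⌋₊) + ⌊n * τ⌋₊) / n := by ring
    _ = τ := by rw [this, mul_div_cancel_left₀ τ hn']

theorem natCeil_div_sub_natFloor_div_le (x : k) {n : ℕ} :
    (⌈x⌉₊ : k) / n - ⌊x⌋₊ / n ≤ 1 / n := by
  rw [← sub_div]
  gcongr
  rw [sub_le_iff_le_add']
  exact_mod_cast Nat.ceil_le_floor_add_one x

end Grid

theorem rounded_path_distance_error_general
    (V : Set (EuclideanSpace ℝ (Fin 2)))
    (h l : ℝ) (hl : 0 < l)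
    (ξ ξ' : ℝ → EuclideanSpace ℝ (Fin 2)) (L σ : ℝ) (hL : 0 < L)
    (hd : ∀ τ ∈ Set.Icc (0:ℝ) 1, HasDerivAt ξ (ξ' τ) τ)
    (hlip : ∀ a ∈ Set.Icc (0:ℝ) 1, ∀ b ∈ Set.Icc (0:ℝ) 1,
      ‖ξ' a - ξ' b‖ ≤ σ * |a - b|)
    (n : ℕ) (hn : n = ⌈L / l⌉₊)
    (v : ℕ → EuclideanSpace ℝ (Fin 2))
    (hv : ∀ i ≤ n, v i ∈ V ∧ ‖v i - ξ ((i : ℝ) / n)‖ ≤ h)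
    (ξR : ℝ → EuclideanSpace ℝ (Fin 2))
    (hR : ∀ τ : ℝ, ξR τ =
      v (⌊(n : ℝ) * τ⌋).toNat +
        ((n : ℝ) * τ - (⌊(n : ℝ) * τ⌋ : ℝ)) •
          (v (⌈(n : ℝ) * τ⌉).toNat - v (⌊(n : ℝ) * τ⌋).toNat)) :
    ∀ τ ∈ Set.Icc (0:ℝ) 1, ‖ξR τ - ξ τ‖ ≤ σ * l ^ 2 / (8 * L ^ 2) + h := by
  intro τ hτ
  have hσ : 0 ≤ σ := by simpa using (norm_nonneg _).trans (hlip 0 (by simp) 1 (by simp))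
  have hn0 : 0 < n := hn ▸ Nat.ceil_pos.2 (div_pos hL hl)
  set i := ⌊(n : ℝ) * τ⌋₊
  set j := ⌈(n : ℝ) * τ⌉₊
  set t := Int.fract ((n : ℝ) * τ)
  have ht : t ∈ Icc (0 : ℝ) 1 := ⟨Int.fract_nonneg _, (Int.fract_lt_one _).le⟩
  have hjn : j ≤ n := Nat.ceil_le.2 (mul_le_of_le_one_right n.cast_nonneg hτ.2)
  have hij : (i : ℝ) / n ≤ j / n := by gcongr; exact Nat.floor_le_ceil _
  have hcell : Icc ((i : ℝ) / n) (j / n) ⊆ Icc 0 1 :=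
    Icc_subset_Icc (by positivity) (div_le_one_of_le₀ (by exact_mod_cast hjn) n.cast_nonneg)
  have hwidth : (j : ℝ) / n - i / n ≤ l / L :=
    (natCeil_div_sub_natFloor_div_le _).trans <| by
      rw [← one_div_div L l]
      exact one_div_le_one_div_of_le (div_pos hL hl) (hn ▸ Nat.le_ceil _)
  calc ‖ξR τ - ξ τ‖
      = ‖(lineMap (v i) (v j) t - lineMap (ξ (i / n)) (ξ (j / n)) t) +
          (lineMap (ξ (i / n)) (ξ (j / n)) t - ξ (lineMap ((i : ℝ) / n) (j / n) t))‖ := by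
        rw [lineMap_natFloor_div_natCeil_div_fract hn0.ne' hτ.1, sub_add_sub_cancel, hR τ,
          Int.floor_toNat, Int.ceil_toNat, Int.self_sub_floor, lineMap_apply_module', add_comm]
    _ ≤ h + σ * ((j : ℝ) / n - i / n) ^ 2 / 8 :=
      norm_add_le_of_le (norm_lineMap_sub_lineMap_le (hv i (Nat.floor_le_ceil _ |>.trans hjn)).2
          (hv j hjn).2 ht)
        (norm_lineMap_sub_le hσ hij ht (fun s hs ↦ hd s (hcell hs))
          (fun s hs r hr ↦ hlip s (hcell hs) r (hcell hr)))
    _ ≤ h + σ * (l / L) ^ 2 / 8 := by gcongr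
    _ = σ * l ^ 2 / (8 * L ^ 2) + h := by ring

theorem rounded_path_distance_error
    (Ω : Set (EuclideanSpace ℝ (Fin 2))) (hΩ : Convex ℝ Ω)
    (V : Set (EuclideanSpace ℝ (Fin 2)))
    (E : EuclideanSpace ℝ (Fin 2) → EuclideanSpace ℝ (Fin 2) → Prop)
    (h l : ℝ) (hh : 0 ≤ h) (hl : 0 < l)
    (containment : V ⊆ Ω)
    (density : ∀ p ∈ Ω, ∃ v ∈ V, ‖p - v‖ ≤ h)
    (connectivity : ∀ v ∈ V, ∀ u ∈ V, ‖v - u‖ ≤ l + 2 * h → E v u)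
    (ξ ξ' : ℝ → EuclideanSpace ℝ (Fin 2)) (L σ : ℝ) (hL : 0 < L)
    (hrange : ∀ τ ∈ Set.Icc (0:ℝ) 1, ξ τ ∈ Ω)
    (hd : ∀ τ ∈ Set.Icc (0:ℝ) 1, HasDerivAt ξ (ξ' τ) τ)
    (hspeed : ∀ τ ∈ Set.Icc (0:ℝ) 1, ‖ξ' τ‖ = L)
    (hlip : ∀ a ∈ Set.Icc (0:ℝ) 1, ∀ b ∈ Set.Icc (0:ℝ) 1,
      ‖ξ' a - ξ' b‖ ≤ σ * |a - b|)
    (n : ℕ) (hn : n = ⌈L / l⌉₊)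
    (v : ℕ → EuclideanSpace ℝ (Fin 2))
    (hv : ∀ i ≤ n, v i ∈ V ∧ ‖v i - ξ ((i : ℝ) / n)‖ ≤ h)
    (ξR : ℝ → EuclideanSpace ℝ (Fin 2))
    (hR : ∀ τ : ℝ, ξR τ =
      v (⌊(n : ℝ) * τ⌋).toNat +
        ((n : ℝ) * τ - (⌊(n : ℝ) * τ⌋ : ℝ)) •
          (v (⌈(n : ℝ) * τ⌉).toNat - v (⌊(n : ℝ) * τ⌋).toNat)) :
    ∀ τ ∈ Set.Icc (0:ℝ) 1, ‖ξR τ - ξ τ‖ ≤ σ * l ^ 2 / (8 * L ^ 2) + h :=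
  rounded_path_distance_error_general V h l hl ξ ξ' L σ hL hd hlip n hn v hv ξR hR
end

section
/- Under the assumptions of the rounding construction (constant-speed path $\xi$ of length $L$, curvature constant $\bar\sigma$, $(h,l)$-dense graph, $n = \lceil L/l \rceil$ pieces), the derivative of the rounded polygonal path satisfies, for almost every $\tau$, $\|(\xi_R - \xi)_\tau(\tau)\| \le \frac{\sqrt{2}\,\bar\sigma l}{L} + 2h\left(\frac{L}{l} + 1\right)$. -/
/-! On a cell `[i/n, (i+1)/n]` the rounded path is affine with derivative `n • (v (i+1) - v i)`.
By the mean value inequality applied to `ξ - (· • ξ' τ)`, the difference quotient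
`n • (ξ ((i+1)/n) - ξ (i/n))` is within `σ/n` of `ξ' τ`; replacing the two path points by
vertices at distance at most `h` costs at most `2nh`. Finally `L/l ≤ n ≤ L/l + 1`, and the cell
boundaries form a null set. -/

open MeasureTheory Set

section

variable {E : Type*} [NormedAddCommGroup E] [NormedSpace ℝ E]

noncomputable def polygonalPath (v : ℕ → E) (t : ℝ) : E :=
  v ⌊t⌋.toNat + (t - ⌊t⌋) • (v ⌈t⌉.toNat - v ⌊t⌋.toNat)

theorem polygonalPath_eq_of_mem_Ioo (v : ℕ → E) {m : ℕ} {t : ℝ}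
    (ht : t ∈ Ioo (m : ℝ) (m + 1)) :
    polygonalPath v t = v m + (t - m) • (v (m + 1) - v m) := by
  have hfloor : ⌊t⌋ = m :=
    Int.floor_eq_iff.mpr ⟨by exact_mod_cast ht.1.le, by exact_mod_cast ht.2⟩
  have hceil : ⌈t⌉ = m + 1 :=
    Int.ceil_eq_iff.mpr ⟨by push_cast; linarith [ht.1], by push_cast; linarith [ht.2]⟩
  rw [polygonalPath, hfloor, hceil]
  simp only [Int.cast_natCast, Int.toNat_natCast]
  rfl

theorem hasDerivAt_polygonalPath (v : ℕ → E) {m : ℕ} {t : ℝ}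
    (ht : t ∈ Ioo (m : ℝ) (m + 1)) :
    HasDerivAt (polygonalPath v) (v (m + 1) - v m) t := by
  have hedge :
      HasDerivAt (fun s : ℝ => v m + (s - m) • (v (m + 1) - v m)) (v (m + 1) - v m) t := by
    simpa using
      (((hasDerivAt_id t).sub_const (m : ℝ)).smul_const (v (m + 1) - v m)).const_add (v m)
  refine hedge.congr_of_eventuallyEq ?_
  filter_upwards [isOpen_Ioo.mem_nhds ht] with s hs
  exact polygonalPath_eq_of_mem_Ioo v hs

theorem hasDerivAt_polygonalPath_const_mul (v : ℕ → E) (c : ℝ) {m : ℕ} {τ : ℝ}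
    (hτ : c * τ ∈ Ioo (m : ℝ) (m + 1)) :
    HasDerivAt (fun τ => polygonalPath v (c * τ)) (c • (v (m + 1) - v m)) τ :=
  (hasDerivAt_polygonalPath v hτ).scomp τ
    ((hasDerivAt_id τ).const_mul c |>.congr_deriv (mul_one c))

theorem norm_slope_sub_le {f f' : ℝ → E} {a b C : ℝ} (y : E) (hab : a < b)
    (hf : ∀ x ∈ Icc a b, HasDerivAt f (f' x) x)
    (hf' : ∀ x ∈ Icc a b, ‖f' x - y‖ ≤ C) :
    ‖slope f a b - y‖ ≤ C := by
  have hmvt := norm_image_sub_le_of_norm_deriv_le_segment' (f := fun x => f x - x • y)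
    (fun x hx => ((hf x hx).sub ((hasDerivAt_id x).smul_const y)).hasDerivWithinAt)
    (fun x hx => by simpa using hf' x (Ico_subset_Icc_self hx)) b (right_mem_Icc.mpr hab.le)
  have hdiff : f b - b • y - (f a - a • y) = (b - a) • (slope f a b - y) := by
    rw [smul_sub, sub_smul_slope, vsub_eq_sub]
    module
  rw [hdiff, norm_smul, Real.norm_of_nonneg (sub_nonneg.mpr hab.le), mul_comm C] at hmvt
  exact le_of_mul_le_mul_left hmvt (sub_pos.mpr hab)

theorem norm_smul_edge_sub_deriv_le {ξ ξ' : ℝ → E} {v : ℕ → E} {n i : ℕ} {σ h τ : ℝ}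
    (hσ : 0 ≤ σ) (hi : i + 1 ≤ n)
    (hτ : τ ∈ Icc ((i : ℝ) / n) ((i + 1) / n))
    (hd : ∀ τ ∈ Icc (0 : ℝ) 1, HasDerivAt ξ (ξ' τ) τ)
    (hlip : ∀ a ∈ Icc (0 : ℝ) 1, ∀ b ∈ Icc (0 : ℝ) 1, ‖ξ' a - ξ' b‖ ≤ σ * |a - b|)
    (hv : ∀ j ≤ n, ‖v j - ξ (j / n)‖ ≤ h) :
    ‖(n : ℝ) • (v (i + 1) - v i) - ξ' τ‖ ≤ σ / n + 2 * n * h := by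
  have hn : (0 : ℝ) < n := by exact_mod_cast (Nat.succ_pos i).trans_le hi
  set a : ℝ := i / n
  set b : ℝ := (i + 1) / n
  have hba : b - a = (n : ℝ)⁻¹ := by simp only [a, b]; field_simp; ring
  have hab : a < b := sub_pos.mp (hba ▸ inv_pos.mpr hn)
  have hsub : Icc a b ⊆ Icc 0 1 := Icc_subset_Icc (by positivity)
    ((div_le_one hn).mpr (by exact_mod_cast hi))
  have hslope : slope ξ a b = (n : ℝ) • (ξ b - ξ a) := by rw [slope_def_module, hba, inv_inv]
  have hmean : ‖slope ξ a b - ξ' τ‖ ≤ σ / n := by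
    refine norm_slope_sub_le _ hab (fun x hx => hd x (hsub hx)) fun x hx => ?_
    have hdist : |x - τ| ≤ (n : ℝ)⁻¹ := by
      rw [abs_sub_le_iff]; constructor <;> linarith [hx.1, hx.2, hτ.1, hτ.2]
    calc ‖ξ' x - ξ' τ‖ ≤ σ * |x - τ| := hlip x (hsub hx) τ (hsub hτ)
      _ ≤ σ * (n : ℝ)⁻¹ := by gcongr
      _ = σ / n := (div_eq_mul_inv σ n).symm
  have hround : ‖(n : ℝ) • (v (i + 1) - v i) - slope ξ a b‖ ≤ 2 * n * h := by
    have hvb : ‖v (i + 1) - ξ b‖ ≤ h := by simpa [b] using hv (i + 1) hi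
    have hva : ‖v i - ξ a‖ ≤ h := hv i (by omega)
    calc ‖(n : ℝ) • (v (i + 1) - v i) - slope ξ a b‖
        = n * ‖(v (i + 1) - ξ b) - (v i - ξ a)‖ := by
          rw [hslope, ← smul_sub, norm_smul, Real.norm_of_nonneg hn.le]; congr 2; abel
      _ ≤ n * (h + h) := by gcongr; exact norm_sub_le_of_le hvb hva
      _ = 2 * n * h := by ring
  calc ‖(n : ℝ) • (v (i + 1) - v i) - ξ' τ‖
      ≤ ‖(n : ℝ) • (v (i + 1) - v i) - slope ξ a b‖ + ‖slope ξ a b - ξ' τ‖ :=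
        norm_sub_le_norm_sub_add_norm_sub _ _ _
    _ ≤ σ / n + 2 * n * h := by linarith

end

theorem ae_mul_ne_intCast {c : ℝ} (hc : c ≠ 0) : ∀ᵐ τ : ℝ, ∀ k : ℤ, c * τ ≠ k := by
  have hcount : {τ : ℝ | ∃ k : ℤ, c * τ = k}.Countable := by
    refine (countable_range fun k : ℤ => (k : ℝ) / c).mono ?_
    rintro τ ⟨k, hk⟩
    exact ⟨k, by simp only [← hk, mul_div_cancel_left₀ τ hc]⟩
  simpa [ae_iff] using hcount.measure_zero volume

theorem rounded_path_derivative_error_general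
    (V : Set (EuclideanSpace ℝ (Fin 2)))
    (h l : ℝ) (hh : 0 ≤ h) (hl : 0 < l)
    (ξ ξ' : ℝ → EuclideanSpace ℝ (Fin 2)) (L σ : ℝ) (hL : 0 < L)
    (hd : ∀ τ ∈ Set.Icc (0:ℝ) 1, HasDerivAt ξ (ξ' τ) τ)
    (hlip : ∀ a ∈ Set.Icc (0:ℝ) 1, ∀ b ∈ Set.Icc (0:ℝ) 1,
      ‖ξ' a - ξ' b‖ ≤ σ * |a - b|)
    (n : ℕ) (hn : n = ⌈L / l⌉₊)
    (v : ℕ → EuclideanSpace ℝ (Fin 2))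
    (hv : ∀ i ≤ n, v i ∈ V ∧ ‖v i - ξ ((i : ℝ) / n)‖ ≤ h)
    (ξR : ℝ → EuclideanSpace ℝ (Fin 2))
    (hR : ∀ τ : ℝ, ξR τ =
      v (⌊(n : ℝ) * τ⌋).toNat +
        ((n : ℝ) * τ - (⌊(n : ℝ) * τ⌋ : ℝ)) •
          (v (⌈(n : ℝ) * τ⌉).toNat - v (⌊(n : ℝ) * τ⌋).toNat)) :
    ∀ᵐ τ ∂(MeasureTheory.volume.restrict (Set.Icc (0:ℝ) 1)),
      ∃ dR : EuclideanSpace ℝ (Fin 2), HasDerivAt ξR dR τ ∧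
        ‖dR - ξ' τ‖ ≤ Real.sqrt 2 * σ * l / L + 2 * h * (L / l + 1) := by
  have hLl : 0 < L / l := div_pos hL hl
  have hn0 : (0 : ℝ) < n := by rw [hn]; exact_mod_cast Nat.ceil_pos.mpr hLl
  have hσ : 0 ≤ σ := (norm_nonneg _).trans (by simpa using hlip 0 (by simp) 1 (by simp))
  have hbound : σ / n + 2 * n * h ≤ Real.sqrt 2 * σ * l / L + 2 * h * (L / l + 1) := by
    have hσn : σ / n ≤ Real.sqrt 2 * σ * l / L := calc
      σ / n ≤ σ / (L / l) := div_le_div_of_nonneg_left hσ hLl (hn ▸ Nat.le_ceil _)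
      _ = 1 * σ * l / L := by field_simp
      _ ≤ Real.sqrt 2 * σ * l / L := by gcongr; exact Real.one_le_sqrt.mpr one_le_two
    have hnh : (n : ℝ) * h ≤ (L / l + 1) * h :=
      mul_le_mul_of_nonneg_right (hn ▸ (Nat.ceil_lt_add_one hLl.le).le) hh
    linarith
  rw [← Measure.restrict_congr_set Ioo_ae_eq_Icc]
  filter_upwards [ae_restrict_mem measurableSet_Ioo,
    ae_restrict_of_ae (ae_mul_ne_intCast hn0.ne')] with τ hτ hτint
  set i := ⌊(n : ℝ) * τ⌋₊
  have hcell : (n : ℝ) * τ ∈ Ioo (i : ℝ) (i + 1) :=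
    ⟨(Nat.floor_le (by nlinarith [hτ.1])).lt_of_ne (by simpa using (hτint i).symm),
      Nat.lt_floor_add_one _⟩
  have hi : i + 1 ≤ n := Nat.floor_lt (by nlinarith [hτ.1]) |>.mpr (by nlinarith [hτ.2])
  have hτi : τ ∈ Icc ((i : ℝ) / n) ((i + 1) / n) :=
    ⟨(div_le_iff₀ hn0).mpr (by linarith [hcell.1]),
      (le_div_iff₀ hn0).mpr (by linarith [hcell.2])⟩
  refine ⟨_, funext hR ▸ hasDerivAt_polygonalPath_const_mul v n hcell, ?_⟩
  exact (norm_smul_edge_sub_deriv_le hσ hi hτi hd hlip fun j hj => (hv j hj).2).trans hbound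

theorem rounded_path_derivative_error
    (Ω : Set (EuclideanSpace ℝ (Fin 2))) (hΩ : Convex ℝ Ω)
    (V : Set (EuclideanSpace ℝ (Fin 2)))
    (E : EuclideanSpace ℝ (Fin 2) → EuclideanSpace ℝ (Fin 2) → Prop)
    (h l : ℝ) (hh : 0 ≤ h) (hl : 0 < l)
    (containment : V ⊆ Ω)
    (density : ∀ p ∈ Ω, ∃ v ∈ V, ‖p - v‖ ≤ h)
    (connectivity : ∀ v ∈ V, ∀ u ∈ V, ‖v - u‖ ≤ l + 2 * h → E v u)
    (ξ ξ' : ℝ → EuclideanSpace ℝ (Fin 2)) (L σ : ℝ) (hL : 0 < L)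
    (hrange : ∀ τ ∈ Set.Icc (0:ℝ) 1, ξ τ ∈ Ω)
    (hd : ∀ τ ∈ Set.Icc (0:ℝ) 1, HasDerivAt ξ (ξ' τ) τ)
    (hspeed : ∀ τ ∈ Set.Icc (0:ℝ) 1, ‖ξ' τ‖ = L)
    (hlip : ∀ a ∈ Set.Icc (0:ℝ) 1, ∀ b ∈ Set.Icc (0:ℝ) 1,
      ‖ξ' a - ξ' b‖ ≤ σ * |a - b|)
    (n : ℕ) (hn : n = ⌈L / l⌉₊)
    (v : ℕ → EuclideanSpace ℝ (Fin 2))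
    (hv : ∀ i ≤ n, v i ∈ V ∧ ‖v i - ξ ((i : ℝ) / n)‖ ≤ h)
    (ξR : ℝ → EuclideanSpace ℝ (Fin 2))
    (hR : ∀ τ : ℝ, ξR τ =
      v (⌊(n : ℝ) * τ⌋).toNat +
        ((n : ℝ) * τ - (⌊(n : ℝ) * τ⌋ : ℝ)) •
          (v (⌈(n : ℝ) * τ⌉).toNat - v (⌊(n : ℝ) * τ⌋).toNat)) :
    ∀ᵐ τ ∂(MeasureTheory.volume.restrict (Set.Icc (0:ℝ) 1)),
      ∃ dR : EuclideanSpace ℝ (Fin 2), HasDerivAt ξR dR τ ∧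
        ‖dR - ξ' τ‖ ≤ Real.sqrt 2 * σ * l / L + 2 * h * (L / l + 1) :=
  rounded_path_derivative_error_general V h l hh hl ξ ξ' L σ hL hd hlip n hn v hv ξR hR
end

section
/- Let $\bar v > 0$, $w : \mathbb{R}^2 \to \mathbb{R}^2$ continuous with $\|w(p)\| \le \bar c_0 < \bar v$ for all $p$, and let $x_O, x_D \in \mathbb{R}^2$. Consider the straight-line constant-speed path $\xi(\tau) = x_O + \tau(x_D - x_O)$. Then its flight duration satisfies $T(\xi) = \int_0^1 f(\xi(\tau), x_D - x_O)\,d\tau \le \frac{\|x_D - x_O\|}{\bar v - \bar c_0}$, where $f(p,q) = \frac{-q^T w(p) + \sqrt{(q^T w(p))^2 + (\bar v^2 - \|w(p)\|^2)\|q\|^2}}{\bar v^2 - \|w(p)\|^2}$. -/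
open scoped RealInnerProductSpace

theorem straight_line_flight_duration_bound
    (vbar c0bar : ℝ) (hv : 0 < vbar) (hc0 : 0 ≤ c0bar) (hc0v : c0bar < vbar)
    (w : EuclideanSpace ℝ (Fin 2) → EuclideanSpace ℝ (Fin 2))
    (hwcont : Continuous w) (hwb : ∀ p, ‖w p‖ ≤ c0bar)
    (f : EuclideanSpace ℝ (Fin 2) → EuclideanSpace ℝ (Fin 2) → ℝ)
    (hf : ∀ p q, f p q =
      (-⟪q, w p⟫ + Real.sqrt (⟪q, w p⟫ ^ 2 + (vbar ^ 2 - ‖w p‖ ^ 2) * ‖q‖ ^ 2)) /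
        (vbar ^ 2 - ‖w p‖ ^ 2))
    (xO xD : EuclideanSpace ℝ (Fin 2))
    (ξ : ℝ → EuclideanSpace ℝ (Fin 2))
    (hξ : ∀ τ : ℝ, ξ τ = xO + τ • (xD - xO)) :
    (∫ τ in (0:ℝ)..1, f (ξ τ) (xD - xO)) ≤ ‖xD - xO‖ / (vbar - c0bar) := by
  set q := xD - xO with hq
  -- pointwise bound
  have key : ∀ p, f p q ≤ ‖q‖ / (vbar - c0bar) := by
    intro p
    set a := ⟪q, w p⟫ with ha
    set c := ‖w p‖ with hc
    have hcb : c ≤ c0bar := hwb p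
    have hcv : c < vbar := lt_of_le_of_lt hcb hc0v
    have hcnn : 0 ≤ c := norm_nonneg _
    have hD : 0 < vbar ^ 2 - c ^ 2 := by nlinarith
    have habs : |a| ≤ ‖q‖ * c := abs_real_inner_le_norm q (w p)
    have hqnn : (0:ℝ) ≤ ‖q‖ := norm_nonneg _
    have hsq : Real.sqrt (a ^ 2 + (vbar ^ 2 - c ^ 2) * ‖q‖ ^ 2) ≤ ‖q‖ * vbar := by
      have h1 : a ^ 2 + (vbar ^ 2 - c ^ 2) * ‖q‖ ^ 2 ≤ (‖q‖ * vbar) ^ 2 := by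
        nlinarith [sq_abs a, abs_nonneg a]
      calc Real.sqrt (a ^ 2 + (vbar ^ 2 - c ^ 2) * ‖q‖ ^ 2)
          ≤ Real.sqrt ((‖q‖ * vbar) ^ 2) := Real.sqrt_le_sqrt h1
        _ = ‖q‖ * vbar := Real.sqrt_sq (by positivity)
    have hN : -a + Real.sqrt (a ^ 2 + (vbar ^ 2 - c ^ 2) * ‖q‖ ^ 2) ≤ ‖q‖ * (vbar + c) := by
      have : -a ≤ ‖q‖ * c := by
        have := neg_abs_le a
        linarith [habs]
      nlinarith
    have step1 : f p q ≤ ‖q‖ / (vbar - c) := by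
      rw [hf]
      rw [div_le_div_iff₀ hD (by linarith)]
      nlinarith [hN, hsq, habs]
    have step2 : ‖q‖ / (vbar - c) ≤ ‖q‖ / (vbar - c0bar) := by
      gcongr
      all_goals linarith
    linarith
  -- continuity
  have hξc : Continuous ξ := by
    have : ξ = fun τ => xO + τ • (xD - xO) := funext hξ
    rw [this]; fun_prop
  have hcont : Continuous fun τ => f (ξ τ) q := by
    simp only [hf]
    apply Continuous.div
    · apply Continuous.add
      · exact (Continuous.inner continuous_const (hwcont.comp hξc)).neg
      · apply Real.continuous_sqrt.comp
        apply Continuous.add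
        · exact (Continuous.inner continuous_const (hwcont.comp hξc)).pow 2
        · exact (Continuous.sub continuous_const
            (((hwcont.comp hξc).norm).pow 2)).mul continuous_const
    · exact Continuous.sub continuous_const (((hwcont.comp hξc).norm).pow 2)
    · intro τ
      have hcb : ‖w (ξ τ)‖ ≤ c0bar := hwb _
      have : ‖w (ξ τ)‖ < vbar := lt_of_le_of_lt hcb hc0v
      have h0 : 0 ≤ ‖w (ξ τ)‖ := norm_nonneg _
      nlinarith
  have hint : IntervalIntegrable (fun τ => f (ξ τ) q) MeasureTheory.volume 0 1 :=
    hcont.intervalIntegrable 0 1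
  calc (∫ τ in (0:ℝ)..1, f (ξ τ) q)
      ≤ ∫ _ in (0:ℝ)..1, ‖q‖ / (vbar - c0bar) := by
        apply intervalIntegral.integral_mono_on (by norm_num) hint
          intervalIntegrable_const
        intro τ _
        exact key (ξ τ)
    _ = ‖q‖ / (vbar - c0bar) := by simp
end
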